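/- arXiv:2404.01270 — 2 statements merged into one kernel-verified Lean document; each statement's English description precedes it below -/
import Mathlib

section
/- Let f(Λ) = -b ln|Λ| + Tr(ΛΣ) + c‖Λ‖₁ where b, c > 0, Σ is symmetric positive semi-definite with max_{i,j}|[Σ - I]_{ij}| ≤ h < ∞, defined on symmetric positive definite matrices Λ ∈ ℝ^{M×M}. Then any minimizer Λ* of f satisfies a bound ‖Λ*‖₂ ≤ B for a constant B depending only on b, c, h, M, and f(I). -/
open Matrix

/-- Spectral (operator ℓ₂ → ℓ₂) norm of a real matrix. -/
noncomputable def specNorm {M : ℕ} (A : Matrix (Fin M) (Fin M) ℝ) : ℝ :=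
  ‖LinearMap.toContinuousLinearMap (Matrix.toEuclideanLin A)‖

/-- The graphical-lasso-type objective `f(Λ) = -b ln|Λ| + Tr(ΛΣ) + c‖Λ‖₁`. -/
noncomputable def glObj {M : ℕ} (b c : ℝ) (Sig Lam : Matrix (Fin M) (Fin M) ℝ) : ℝ :=
  -b * Real.log Lam.det + (Lam * Sig).trace + c * ∑ i, ∑ j, |Lam i j|

lemma euclid_norm_le_sum_abs {n : ℕ} (y : EuclideanSpace ℝ (Fin n)) :
    ‖y‖ ≤ ∑ i, |y i| := by
  have hS : (0:ℝ) ≤ ∑ i, |y i| := Finset.sum_nonneg fun i _ => abs_nonneg _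
  rw [EuclideanSpace.norm_eq]
  have key : (∑ i, ‖y i‖ ^ 2) ≤ (∑ i, |y i|) ^ 2 := by
    have h1 : ∀ i ∈ Finset.univ, ‖y i‖ ^ 2 ≤ |y i| * ∑ j, |y j| := by
      intro i _
      have h2 : |y i| ≤ ∑ j, |y j| :=
        Finset.single_le_sum (f := fun j => |y j|) (fun j _ => abs_nonneg _) (Finset.mem_univ i)
      rw [Real.norm_eq_abs, sq]
      exact mul_le_mul_of_nonneg_left h2 (abs_nonneg _)
    calc (∑ i, ‖y i‖ ^ 2) ≤ ∑ i, |y i| * ∑ j, |y j| := Finset.sum_le_sum h1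
      _ = (∑ i, |y i|) ^ 2 := by rw [← Finset.sum_mul, sq]
  calc Real.sqrt (∑ i, ‖y i‖ ^ 2) ≤ Real.sqrt ((∑ i, |y i|) ^ 2) := Real.sqrt_le_sqrt key
    _ = ∑ i, |y i| := Real.sqrt_sq hS

lemma euclid_abs_le_norm {n : ℕ} (x : EuclideanSpace ℝ (Fin n)) (j : Fin n) :
    |x j| ≤ ‖x‖ := by
  rw [EuclideanSpace.norm_eq]
  have h1 : |x j| = Real.sqrt (‖x j‖ ^ 2) := by
    rw [Real.norm_eq_abs, Real.sqrt_sq (abs_nonneg _)]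
  rw [h1]
  apply Real.sqrt_le_sqrt
  exact Finset.single_le_sum (f := fun i => ‖x i‖ ^ 2)
    (fun i _ => sq_nonneg _) (Finset.mem_univ j)

lemma specNorm_le_sum_abs {n : ℕ} (A : Matrix (Fin n) (Fin n) ℝ) :
    specNorm A ≤ ∑ i, ∑ j, |A i j| := by
  have hS : (0:ℝ) ≤ ∑ i, ∑ j, |A i j| :=
    Finset.sum_nonneg fun i _ => Finset.sum_nonneg fun j _ => abs_nonneg _
  apply ContinuousLinearMap.opNorm_le_bound _ hS
  intro x
  have hx : (LinearMap.toContinuousLinearMap (toEuclideanLin A)) x = toEuclideanLin A x := rfl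
  rw [hx]
  calc ‖toEuclideanLin A x‖ ≤ ∑ i, |toEuclideanLin A x i| := euclid_norm_le_sum_abs _
    _ ≤ ∑ i, ∑ j, |A i j| * ‖x‖ := by
        apply Finset.sum_le_sum
        intro i _
        have h1 : toEuclideanLin A x i = ∑ j, A i j * x j := rfl
        rw [h1]
        calc |∑ j, A i j * x j| ≤ ∑ j, |A i j * x j| := Finset.abs_sum_le_sum_abs _ _
          _ ≤ ∑ j, |A i j| * ‖x‖ := by
              apply Finset.sum_le_sum
              intro j _
              rw [abs_mul]
              exact mul_le_mul_of_nonneg_left (euclid_abs_le_norm x j) (abs_nonneg _)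
    _ = (∑ i, ∑ j, |A i j|) * ‖x‖ := by rw [Finset.sum_mul]; simp [Finset.sum_mul]

lemma eigenvalue_le_specNorm {n : ℕ} {A : Matrix (Fin n) (Fin n) ℝ}
    (hA : A.IsHermitian) (i : Fin n) : hA.eigenvalues i ≤ specNorm A := by
  set v := hA.eigenvectorBasis i with hv_def
  have hv : ‖v‖ = 1 := hA.eigenvectorBasis.orthonormal.1 i
  have h1 : toEuclideanLin A v = (hA.eigenvalues i) • v := by
    apply PiLp.ext
    intro j
    have h2 := congrFun (hA.mulVec_eigenvectorBasis i) j
    simpa [toEuclideanLin_apply] using h2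
  have h2 : ‖toEuclideanLin A v‖ ≤ specNorm A * ‖v‖ :=
    (LinearMap.toContinuousLinearMap (toEuclideanLin A)).le_opNorm v
  rw [h1, norm_smul, hv, mul_one, mul_one, Real.norm_eq_abs] at h2
  exact (le_abs_self _).trans h2

lemma trace_mul_psd_nonneg {n : ℕ} {L S : Matrix (Fin n) (Fin n) ℝ}
    (hL : L.PosSemidef) (hS : S.PosSemidef) : 0 ≤ (L * S).trace := by
  obtain ⟨B, hB⟩ : ∃ B : Matrix (Fin n) (Fin n) ℝ, S = Bᴴ * B := by
    open scoped MatrixOrder Matrix.Norms.L2Operator in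
    exact CStarAlgebra.nonneg_iff_eq_star_mul_self.mp hS.nonneg
  have hP : (B * L * Bᴴ).PosSemidef := hL.mul_mul_conjTranspose_same B
  have h1 : (L * S).trace = (B * L * Bᴴ).trace := by
    rw [hB, ← Matrix.mul_assoc, Matrix.trace_mul_cycle]
  rw [h1, Matrix.trace]
  apply Finset.sum_nonneg
  intro i _
  have h2 := hP.dotProduct_mulVec_nonneg (Pi.single i 1)
  simpa [Matrix.mulVec_single, dotProduct, Pi.single_apply] using h2

theorem graphical_lasso_minimizer_specNorm_bounded
    (M : ℕ) (b c h : ℝ) (hb : 0 < b) (hc : 0 < c) (hh : 0 ≤ h) :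
    -- a bound depending only on `b`, `c`, `h`, `M`, and the value `f(I)`
    ∃ Bfun : ℝ → ℝ,
      ∀ Sig : Matrix (Fin M) (Fin M) ℝ, Sig.PosSemidef →
        (∀ i j, |(Sig - 1) i j| ≤ h) →
        ∀ Lstar : Matrix (Fin M) (Fin M) ℝ, Lstar.IsSymm → Lstar.PosDef →
          (∀ Lam : Matrix (Fin M) (Fin M) ℝ, Lam.IsSymm → Lam.PosDef →
            glObj b c Sig Lstar ≤ glObj b c Sig Lam) →
          specNorm Lstar ≤ Bfun (glObj b c Sig 1) := by
  refine ⟨fun v => ((b * M + Real.sqrt ((b * M) ^ 2 + c * max v 0)) / c) ^ 2,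
    fun Sig hSig hSigh Lstar hLsymm hLpd hmin => ?_⟩
  set v := glObj b c Sig 1 with hv_def
  set s := specNorm Lstar with hs_def
  rcases Nat.eq_zero_or_pos M with hM | hM
  · -- degenerate case: 0×0 matrices
    subst hM
    have hs0 : s ≤ 0 := by
      apply ContinuousLinearMap.opNorm_le_bound _ le_rfl
      intro x
      have : ‖toEuclideanLin Lstar x‖ = 0 := by
        rw [EuclideanSpace.norm_eq]
        simp
      rw [show (LinearMap.toContinuousLinearMap (toEuclideanLin Lstar)) x
          = toEuclideanLin Lstar x from rfl, this, zero_mul]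
    exact hs0.trans (sq_nonneg _)
  · have hHerm : Lstar.IsHermitian := hLpd.1
    -- positivity of s
    have hi0 : (0 : ℝ) < hHerm.eigenvalues ⟨0, hM⟩ := hLpd.eigenvalues_pos _
    have hs_pos : 0 < s := lt_of_lt_of_le hi0 (eigenvalue_le_specNorm hHerm _)
    -- objective at identity bounds objective at Lstar
    have h0 : glObj b c Sig Lstar ≤ v := hmin 1 Matrix.isSymm_one Matrix.PosDef.one
    rw [glObj] at h0
    -- log det bound
    have hev_le : ∀ i, hHerm.eigenvalues i ≤ s := fun i => eigenvalue_le_specNorm hHerm i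
    have hdet : Lstar.det ≤ s ^ M := by
      have h1 : Lstar.det = ∏ i, hHerm.eigenvalues i := by
        have := hHerm.det_eq_prod_eigenvalues
        simpa using this
      rw [h1]
      calc (∏ i, hHerm.eigenvalues i) ≤ ∏ _i : Fin M, s :=
            Finset.prod_le_prod (fun i _ => (hLpd.eigenvalues_pos i).le) (fun i _ => hev_le i)
        _ = s ^ M := by simp
    have hdet_pos : 0 < Lstar.det := hLpd.det_pos
    have hsqrt_pos : 0 < Real.sqrt s := Real.sqrt_pos.mpr hs_pos
    have hlogs : Real.log s ≤ 2 * Real.sqrt s := by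
      have h1 : Real.log (Real.sqrt s) = Real.log s / 2 := Real.log_sqrt hs_pos.le
      have h2 : Real.log (Real.sqrt s) ≤ Real.sqrt s - 1 :=
        Real.log_le_sub_one_of_pos hsqrt_pos
      rw [h1] at h2
      linarith
    have hlog : Real.log Lstar.det ≤ (M : ℝ) * (2 * Real.sqrt s) := by
      calc Real.log Lstar.det ≤ Real.log (s ^ M) := Real.log_le_log hdet_pos hdet
        _ = (M : ℝ) * Real.log s := by rw [Real.log_pow]
        _ ≤ (M : ℝ) * (2 * Real.sqrt s) := by
            apply mul_le_mul_of_nonneg_left hlogs (Nat.cast_nonneg M)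
    -- trace term nonneg
    have htr : 0 ≤ (Lstar * Sig).trace := trace_mul_psd_nonneg hLpd.posSemidef hSig
    -- l1 bound
    have hl1 : s ≤ ∑ i, ∑ j, |Lstar i j| := specNorm_le_sum_abs Lstar
    -- combine: c * s - 2 b M sqrt s ≤ v
    have hblog : b * Real.log Lstar.det ≤ b * ((M : ℝ) * (2 * Real.sqrt s)) :=
      mul_le_mul_of_nonneg_left hlog hb.le
    have hcl1 : c * s ≤ c * ∑ i, ∑ j, |Lstar i j| := mul_le_mul_of_nonneg_left hl1 hc.le
    have hkey : c * s - 2 * b * M * Real.sqrt s ≤ v := by nlinarith [h0]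
    -- final quadratic algebra
    set u := Real.sqrt s with hu_def
    have hu2 : u ^ 2 = s := Real.sq_sqrt hs_pos.le
    have hu_nonneg : 0 ≤ u := Real.sqrt_nonneg s
    set V := max v 0 with hV_def
    have hV_nonneg : 0 ≤ V := le_max_right _ _
    have hvV : v ≤ V := le_max_left _ _
    set q := Real.sqrt ((b * M) ^ 2 + c * V) with hq_def
    have hq_nonneg : 0 ≤ q := Real.sqrt_nonneg _
    have hq2 : q ^ 2 = (b * M) ^ 2 + c * V :=
      Real.sq_sqrt (by positivity)
    have hquad : c * u ^ 2 - 2 * b * M * u ≤ V := by rw [hu2]; linarith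
    have hu_le : c * u ≤ b * M + q := by nlinarith [hq2, hquad, hq_nonneg, hu_nonneg]
    have hfin : u ≤ (b * M + q) / c := by
      rw [le_div_iff₀ hc]; linarith
    calc s = u ^ 2 := hu2.symm
      _ ≤ ((b * M + q) / c) ^ 2 := by
          apply pow_le_pow_left₀ hu_nonneg hfin
end

section
/- Under the assumptions: (i) every pairwise distance between samples is at most R, (ii) each retained component k satisfies N̄_k > δ > 0 and ‖Λ_k‖₂ ≤ B, (iii) λ₀ > 0, and (iv) responsibilities r_k^{s(n)} ∈ [0,1] are unchanged by perturbing one sample—the sum over k = 1,…,K of the KL divergences KL(N(w_k, (λ_k Λ_k)^{-1}) ∥ N(w̃_k, (λ_k Λ_k)^{-1})) is at most K B R² / (2λ₀), where w_k, w̃_k are the posterior means on the original and perturbed datasets and λ_k = λ₀ + N̄_k. -/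
open Matrix MeasureTheory

/-- Density of a multivariate Gaussian with mean `m` and *precision* matrix `P`
(i.e. covariance `P⁻¹`). -/
noncomputable def gaussPdf {M : ℕ} (P : Matrix (Fin M) (Fin M) ℝ)
    (m : Fin M → ℝ) (η : Fin M → ℝ) : ℝ :=
  Real.sqrt P.det / (2 * Real.pi) ^ ((M : ℝ) / 2) *
    Real.exp (-(1 / 2) * ((η - m) ⬝ᵥ P.mulVec (η - m)))

/-- Euclidean norm of a vector. -/
noncomputable def vecNorm {M : ℕ} (x : Fin M → ℝ) : ℝ :=
  Real.sqrt (∑ i, x i ^ 2)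

section AuxKL
open Real
open scoped MatrixOrder

lemma int_x_exp : ∫ t : ℝ, t * Real.exp (-(1/2) * t ^ 2) = 0 := by
  have h := MeasureTheory.integral_neg_eq_self
    (fun t : ℝ => t * Real.exp (-(1/2) * t ^ 2)) volume
  have e : (fun t : ℝ => -t * Real.exp (-(1/2) * (-t) ^ 2))
      = fun t : ℝ => -(t * Real.exp (-(1/2) * t ^ 2)) := by
    funext t; rw [neg_sq]; ring
  rw [show (fun t : ℝ => (fun s : ℝ => s * Real.exp (-(1/2) * s ^ 2)) (-t))
      = fun t : ℝ => -(t * Real.exp (-(1/2) * t ^ 2)) from e, integral_neg] at h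
  linarith

lemma int_exp_sq : ∫ t : ℝ, Real.exp (-(1/2) * t ^ 2) = Real.sqrt (2 * Real.pi) := by
  rw [show ∫ t : ℝ, Real.exp (-(1/2) * t ^ 2) = √(π / (1/2)) from integral_gaussian (1/2)]
  congr 1; ring

lemma integrable_f0 : Integrable (fun t : ℝ => Real.exp (-(1/2) * t ^ 2)) :=
  integrable_exp_neg_mul_sq (by norm_num)

lemma integrable_tf0 : Integrable (fun t : ℝ => t * Real.exp (-(1/2) * t ^ 2)) :=
  integrable_mul_exp_neg_mul_sq (by norm_num)

lemma prod_exp_eq {M : ℕ} (ζ : Fin M → ℝ) :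
    Real.exp (-(1/2) * (ζ ⬝ᵥ ζ)) = ∏ i, Real.exp (-(1/2) * (ζ i) ^ 2) := by
  rw [← Real.exp_sum]
  congr 1
  simp only [dotProduct, Finset.mul_sum]
  congr 1
  funext i
  ring

lemma std_gauss_one (M : ℕ) :
    ∫ ζ : Fin M → ℝ, Real.exp (-(1/2) * (ζ ⬝ᵥ ζ)) = (2 * Real.pi) ^ ((M : ℝ)/2) := by
  simp_rw [prod_exp_eq]
  rw [MeasureTheory.volume_pi, MeasureTheory.integral_fintype_prod_eq_pow (ι := Fin M)
    (fun t : ℝ => Real.exp (-(1/2) * t ^ 2)), int_exp_sq]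
  rw [Real.sqrt_eq_rpow, Fintype.card_fin, ← Real.rpow_natCast ((2*π) ^ ((1:ℝ)/2)) M,
    ← Real.rpow_mul (by positivity)]
  congr 1
  ring

noncomputable def gfac {M : ℕ} (i : Fin M) : Fin M → ℝ → ℝ :=
  fun j t => if j = i then t * Real.exp (-(1/2) * t ^ 2) else Real.exp (-(1/2) * t ^ 2)

lemma prod_split {M : ℕ} (i : Fin M) (ζ : Fin M → ℝ) :
    (∏ j, Real.exp (-(1/2) * (ζ j) ^ 2)) * ζ i = ∏ j, gfac i j (ζ j) := by
  have h1 : ∏ j, gfac i j (ζ j)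
      = (ζ i * Real.exp (-(1/2) * (ζ i) ^ 2)) *
        ∏ j ∈ Finset.univ.erase i, Real.exp (-(1/2) * (ζ j) ^ 2) := by
    rw [← Finset.mul_prod_erase Finset.univ _ (Finset.mem_univ i)]
    unfold gfac
    rw [if_pos rfl]
    congr 1
    exact Finset.prod_congr rfl (fun j hj => if_neg (Finset.ne_of_mem_erase hj))
  have h2 := Finset.mul_prod_erase Finset.univ
    (fun j => Real.exp (-(1/2) * (ζ j) ^ 2)) (Finset.mem_univ i)
  rw [h1, ← h2]
  ring

lemma integrable_gfac {M : ℕ} (i j : Fin M) : Integrable (gfac i j) := by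
  unfold gfac
  rcases eq_or_ne j i with h | h
  · simpa [h] using integrable_tf0
  · simpa [h] using integrable_f0

lemma integrable_std_lin {M : ℕ} (i : Fin M) :
    Integrable (fun ζ : Fin M → ℝ => Real.exp (-(1/2) * (ζ ⬝ᵥ ζ)) * ζ i) := by
  have e : (fun ζ : Fin M → ℝ => Real.exp (-(1/2) * (ζ ⬝ᵥ ζ)) * ζ i)
      = fun ζ => ∏ j, gfac i j (ζ j) := by
    funext ζ; rw [prod_exp_eq, prod_split]
  rw [e]
  exact Integrable.fintype_prod (fun j => integrable_gfac i j)

lemma integrable_std_one {M : ℕ} :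
    Integrable (fun ζ : Fin M → ℝ => Real.exp (-(1/2) * (ζ ⬝ᵥ ζ))) := by
  have e : (fun ζ : Fin M → ℝ => Real.exp (-(1/2) * (ζ ⬝ᵥ ζ)))
      = fun ζ => ∏ j, (fun t : ℝ => Real.exp (-(1/2) * t ^ 2)) (ζ j) := by
    funext ζ; rw [prod_exp_eq]
  rw [e]
  exact Integrable.fintype_prod (fun j => integrable_f0)

lemma std_gauss_lin {M : ℕ} (i : Fin M) :
    ∫ ζ : Fin M → ℝ, Real.exp (-(1/2) * (ζ ⬝ᵥ ζ)) * ζ i = 0 := by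
  have e : (fun ζ : Fin M → ℝ => Real.exp (-(1/2) * (ζ ⬝ᵥ ζ)) * ζ i)
      = fun ζ => ∏ j, gfac i j (ζ j) := by
    funext ζ; rw [prod_exp_eq, prod_split]
  rw [e, MeasureTheory.volume_pi, MeasureTheory.integral_fintype_prod_eq_prod (f := gfac i)]
  refine Finset.prod_eq_zero (Finset.mem_univ i) ?_
  unfold gfac
  simpa using int_x_exp

lemma std_gauss_int {M : ℕ} (c : Fin M → ℝ) (C : ℝ) :
    ∫ ζ : Fin M → ℝ, Real.exp (-(1/2) * (ζ ⬝ᵥ ζ)) * (c ⬝ᵥ ζ + C)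
      = C * (2 * Real.pi) ^ ((M : ℝ)/2) := by
  have e : (fun ζ : Fin M → ℝ => Real.exp (-(1/2) * (ζ ⬝ᵥ ζ)) * (c ⬝ᵥ ζ + C))
      = fun ζ => (∑ i, c i * (Real.exp (-(1/2) * (ζ ⬝ᵥ ζ)) * ζ i))
          + C * Real.exp (-(1/2) * (ζ ⬝ᵥ ζ)) := by
    funext ζ
    simp only [dotProduct, mul_add, Finset.mul_sum]
    congr 1
    · exact Finset.sum_congr rfl (fun i _ => by ring)
    · exact mul_comm _ _
  rw [e]
  have hint1 : Integrable (fun ζ : Fin M → ℝ =>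
      ∑ i, c i * (Real.exp (-(1/2) * (ζ ⬝ᵥ ζ)) * ζ i)) :=
    MeasureTheory.integrable_finset_sum _ (fun i _ =>
      (integrable_std_lin i).const_mul (c i))
  rw [MeasureTheory.integral_add hint1 (integrable_std_one.const_mul C),
    MeasureTheory.integral_finset_sum _ (fun i _ =>
      (integrable_std_lin i).const_mul (c i))]
  simp_rw [integral_const_mul, std_gauss_lin, std_gauss_one]
  simp

lemma integral_affine {M : ℕ} (A : Matrix (Fin M) (Fin M) ℝ) (hA : A.det ≠ 0)
    (m : Fin M → ℝ) (g : (Fin M → ℝ) → ℝ) :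
    ∫ η : Fin M → ℝ, g η = ∫ ζ : Fin M → ℝ, |A.det| * g (m + A.mulVec ζ) := by
  have hU : IsUnit A.det := isUnit_iff_ne_zero.mpr hA
  set L : (Fin M → ℝ) →L[ℝ] (Fin M → ℝ) :=
    LinearMap.toContinuousLinearMap (Matrix.toLin' A) with hL
  have hLapp : ∀ ζ, L ζ = A.mulVec ζ := fun ζ => by
    simp [hL, Matrix.toLin'_apply]
  have hderiv : ∀ ζ ∈ (Set.univ : Set (Fin M → ℝ)),
      HasFDerivWithinAt (fun ζ => m + A.mulVec ζ) L Set.univ ζ := by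
    intro ζ _
    have : HasFDerivAt (fun ζ => m + L ζ) L ζ := (L.hasFDerivAt).const_add m
    have e : (fun ζ => m + A.mulVec ζ) = fun ζ => m + L ζ := by
      funext ζ; rw [hLapp]
    rw [e]
    exact this.hasFDerivWithinAt
  have hinj : Set.InjOn (fun ζ => m + A.mulVec ζ) Set.univ := by
    intro a _ b _ hab
    have h1 : A.mulVec a = A.mulVec b := by
      have := hab; simpa using this
    have := congrArg (A⁻¹.mulVec) h1
    rwa [Matrix.mulVec_mulVec, Matrix.mulVec_mulVec, Matrix.nonsing_inv_mul A hU,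
      Matrix.one_mulVec, Matrix.one_mulVec] at this
  have himg : (fun ζ => m + A.mulVec ζ) '' Set.univ = Set.univ := by
    apply Set.eq_univ_of_forall
    intro η
    exact ⟨A⁻¹.mulVec (η - m), Set.mem_univ _, by
      simp [Matrix.mulVec_mulVec, Matrix.mul_nonsing_inv A hU, Matrix.one_mulVec]⟩
  have key := integral_image_eq_integral_abs_det_fderiv_smul volume MeasurableSet.univ
    hderiv hinj g (f' := fun _ => L)
  rw [himg] at key
  rw [MeasureTheory.setIntegral_univ, MeasureTheory.setIntegral_univ] at key
  rw [key]
  congr 1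
  funext ζ
  have hdet : L.det = A.det := by
    rw [ContinuousLinearMap.det]
    erw [LinearMap.coe_toContinuousLinearMap]
    exact LinearMap.det_toLin' A
  rw [hdet, smul_eq_mul]

lemma vecNorm_nonneg {M : ℕ} (x : Fin M → ℝ) : 0 ≤ vecNorm x := Real.sqrt_nonneg _

lemma specNorm_nonneg {M : ℕ} (A : Matrix (Fin M) (Fin M) ℝ) : 0 ≤ specNorm A :=
  norm_nonneg _

lemma quad_bound {M : ℕ} (A : Matrix (Fin M) (Fin M) ℝ) (v : Fin M → ℝ) :
    v ⬝ᵥ A.mulVec v ≤ specNorm A * vecNorm v ^ 2 := by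
  set x : EuclideanSpace ℝ (Fin M) := (WithLp.equiv 2 (Fin M → ℝ)).symm v with hx
  set L : EuclideanSpace ℝ (Fin M) →L[ℝ] EuclideanSpace ℝ (Fin M) :=
    LinearMap.toContinuousLinearMap (Matrix.toEuclideanLin A) with hL
  have hnorm : ‖x‖ = vecNorm v := by
    rw [EuclideanSpace.norm_eq, vecNorm]
    congr 1
    exact Finset.sum_congr rfl fun i _ => by
      show ‖v i‖ ^ 2 = v i ^ 2
      rw [Real.norm_eq_abs, sq_abs]
  have hdot : v ⬝ᵥ A.mulVec v = inner ℝ x (L x) := by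
    rw [PiLp.inner_apply]
    simp only [RCLike.inner_apply, conj_trivial]
    exact Finset.sum_congr rfl fun i _ => mul_comm _ _
  have h1 : inner ℝ x (L x) ≤ ‖x‖ * ‖L x‖ := real_inner_le_norm x (L x)
  have h2 : ‖L x‖ ≤ ‖L‖ * ‖x‖ := L.le_opNorm x
  have : inner ℝ x (L x) ≤ ‖x‖ * (‖L‖ * ‖x‖) :=
    h1.trans (mul_le_mul_of_nonneg_left h2 (norm_nonneg x))
  rw [hdot]
  calc (inner ℝ x (L x) : ℝ) ≤ ‖x‖ * (‖L‖ * ‖x‖) := this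
    _ = ‖L‖ * ‖x‖ ^ 2 := by ring
    _ = specNorm A * vecNorm v ^ 2 := by rw [hnorm]; rfl

lemma gauss_KL {M : ℕ} {P : Matrix (Fin M) (Fin M) ℝ} (hsym : P.IsSymm) (hpd : P.PosDef)
    (m m' : Fin M → ℝ) :
    ∫ η : Fin M → ℝ, gaussPdf P m η * Real.log (gaussPdf P m η / gaussPdf P m' η)
      = (1/2) * ((m - m') ⬝ᵥ P.mulVec (m - m')) := by
  classical
  set d := m - m' with hd
  set C : ℝ := (1/2) * (d ⬝ᵥ P.mulVec d) with hC
  set c0 : ℝ := Real.sqrt P.det / (2 * Real.pi) ^ ((M : ℝ) / 2) with hc0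
  have hdet : (0:ℝ) < P.det := hpd.det_pos
  have hc0pos : 0 < c0 := by
    apply div_pos (Real.sqrt_pos.mpr hdet)
    positivity
  have symmdot : ∀ a b : Fin M → ℝ, a ⬝ᵥ P.mulVec b = b ⬝ᵥ P.mulVec a := by
    intro a b
    rw [Matrix.dotProduct_mulVec]
    nth_rewrite 1 [← hsym]
    rw [Matrix.vecMul_transpose, dotProduct_comm]
  -- Step 1: pointwise rewrite
  have step1 : ∀ η : Fin M → ℝ,
      gaussPdf P m η * Real.log (gaussPdf P m η / gaussPdf P m' η)
        = gaussPdf P m η * (d ⬝ᵥ P.mulVec (η - m) + C) := by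
    intro η
    congr 1
    have hratio : gaussPdf P m η / gaussPdf P m' η
        = Real.exp ((-(1/2) * ((η - m) ⬝ᵥ P.mulVec (η - m)))
            - (-(1/2) * ((η - m') ⬝ᵥ P.mulVec (η - m')))) := by
      rw [gaussPdf, gaussPdf, mul_div_mul_left _ _ (ne_of_gt hc0pos), Real.exp_sub]
    rw [hratio, Real.log_exp]
    have hsplit : η - m' = (η - m) + d := by rw [hd]; abel
    have hexp : (η - m') ⬝ᵥ P.mulVec (η - m')
        = (η - m) ⬝ᵥ P.mulVec (η - m) + 2 * (d ⬝ᵥ P.mulVec (η - m)) + d ⬝ᵥ P.mulVec d := by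
      rw [hsplit, Matrix.mulVec_add, add_dotProduct, dotProduct_add,
        dotProduct_add, symmdot (η - m) d]
      ring
    rw [hexp, hC]
    ring
  simp_rw [step1]
  -- Step 2: change of variables
  set S := CFC.sqrt P with hS
  have hS2 : S * S = P := CFC.sqrt_mul_sqrt_self P hpd.posSemidef.nonneg
  have hSsym : Sᵀ = S := by
    have h := (Matrix.nonneg_iff_posSemidef.mp (CFC.sqrt_nonneg P)).1
    ext i j
    have := congrFun (congrFun h i) j
    simpa [Matrix.conjTranspose_apply] using this
  have hdetS : S.det ≠ 0 := by
    intro h0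
    rw [← hS2, Matrix.det_mul, h0, mul_zero] at hdet
    exact lt_irrefl _ hdet
  have hUS : IsUnit S.det := isUnit_iff_ne_zero.mpr hdetS
  have hdetSinv : (S⁻¹).det ≠ 0 := by
    rw [Matrix.det_nonsing_inv]
    simpa using hdetS
  have hPS : P * S⁻¹ = S := by
    rw [← hS2, mul_assoc, Matrix.mul_nonsing_inv S hUS, mul_one]
  have hSS : ∀ ζ : Fin M → ℝ, S.mulVec (S⁻¹.mulVec ζ) = ζ := by
    intro ζ
    rw [Matrix.mulVec_mulVec, Matrix.mul_nonsing_inv S hUS, Matrix.one_mulVec]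
  have hvm : ∀ u : Fin M → ℝ, u ᵥ* S = S *ᵥ u := by
    intro u
    rw [← Matrix.mulVec_transpose S u, hSsym]
  set c : Fin M → ℝ := S.mulVec d with hc
  have key := integral_affine S⁻¹ hdetSinv m
    (fun η => gaussPdf P m η * (d ⬝ᵥ P.mulVec (η - m) + C))
  rw [key]
  have inner_eq : ∀ ζ : Fin M → ℝ,
      |(S⁻¹).det| * (gaussPdf P m (m + S⁻¹.mulVec ζ) *
        (d ⬝ᵥ P.mulVec ((m + S⁻¹.mulVec ζ) - m) + C))
      = (|(S⁻¹).det| * c0) * (Real.exp (-(1/2) * (ζ ⬝ᵥ ζ)) * (c ⬝ᵥ ζ + C)) := by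
    intro ζ
    have hcancel : (m + S⁻¹.mulVec ζ) - m = S⁻¹.mulVec ζ := by abel
    have hPmul : P.mulVec (S⁻¹.mulVec ζ) = S.mulVec ζ := by
      rw [Matrix.mulVec_mulVec, hPS]
    have hq : (S⁻¹.mulVec ζ) ⬝ᵥ P.mulVec (S⁻¹.mulVec ζ) = ζ ⬝ᵥ ζ := by
      rw [hPmul, Matrix.dotProduct_mulVec, hvm, hSS]
    have hlin : d ⬝ᵥ P.mulVec (S⁻¹.mulVec ζ) = c ⬝ᵥ ζ := by
      rw [hPmul, Matrix.dotProduct_mulVec, hvm, hc]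
    simp only [gaussPdf]
    rw [hcancel, hq, hlin, ← hc0]
    ring
  simp_rw [inner_eq]
  rw [MeasureTheory.integral_const_mul, std_gauss_int]
  -- Step 3: constants
  have habs : |S.det| = Real.sqrt P.det := by
    have hdd : S.det * S.det = P.det := by rw [← Matrix.det_mul, hS2]
    rw [← hdd, ← sq, Real.sqrt_sq_eq_abs]
  have habsinv : |(S⁻¹).det| = (Real.sqrt P.det)⁻¹ := by
    rw [Matrix.det_nonsing_inv, Ring.inverse_eq_inv', abs_inv, habs]
  rw [habsinv, hc0]
  have h2pi : (0:ℝ) < (2 * Real.pi) ^ ((M : ℝ) / 2) := by positivity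
  have hsq : (0:ℝ) < Real.sqrt P.det := Real.sqrt_pos.mpr hdet
  field_simp
  try ring


end AuxKL

theorem collabdict_renyi_differential_privacy
    (K N Mdim : ℕ)
    (Lam : Fin K → Matrix (Fin Mdim) (Fin Mdim) ℝ)
    (hsym : ∀ k, (Lam k).IsSymm) (hpd : ∀ k, (Lam k).PosDef)
    (lam0 δ R B : ℝ) (hlam0 : 0 < lam0) (hδ : 0 < δ)
    (m0 : Fin Mdim → ℝ)
    (r : Fin K → Fin N → ℝ)
    (hr0 : ∀ k n, 0 ≤ r k n) (hr1 : ∀ k n, r k n ≤ 1)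
    (x xt : Fin N → Fin Mdim → ℝ)
    (n' : Fin N) (hsame : ∀ n, n ≠ n' → xt n = x n)
    (hR : vecNorm (x n' - xt n') ≤ R)
    (Nbar : Fin K → ℝ) (hNbar : ∀ k, Nbar k = ∑ n, r k n)
    (hNδ : ∀ k, δ < Nbar k)
    (hB : ∀ k, specNorm (Lam k) ≤ B)
    (lam : Fin K → ℝ) (hlam : ∀ k, lam k = lam0 + Nbar k)
    (w wt : Fin K → Fin Mdim → ℝ)
    (hw : ∀ k, w k = (1 / lam k) • (lam0 • m0 + ∑ n, r k n • x n))
    (hwt : ∀ k, wt k = (1 / lam k) • (lam0 • m0 + ∑ n, r k n • xt n)) :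
    ∑ k, ∫ η : Fin Mdim → ℝ,
        gaussPdf (lam k • Lam k) (w k) η *
          Real.log (gaussPdf (lam k • Lam k) (w k) η /
            gaussPdf (lam k • Lam k) (wt k) η) ≤
      (K : ℝ) * B * R ^ 2 / (2 * lam0) := by
  classical
  set v : Fin Mdim → ℝ := x n' - xt n' with hv
  have hR0 : 0 ≤ R := le_trans (vecNorm_nonneg _) hR
  have key : ∀ k, (∫ η : Fin Mdim → ℝ,
        gaussPdf (lam k • Lam k) (w k) η *
          Real.log (gaussPdf (lam k • Lam k) (w k) η /
            gaussPdf (lam k • Lam k) (wt k) η))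
      ≤ B * R ^ 2 / (2 * lam0) := by
    intro k
    have hB0 : 0 ≤ B := le_trans (specNorm_nonneg (Lam k)) (hB k)
    have hlk : 0 < lam k := by
      have := (hδ.trans (hNδ k)); rw [hlam k]; linarith
    have hlk0 : lam0 ≤ lam k := by
      have := (hδ.trans (hNδ k)); rw [hlam k]; linarith
    have hsymk : (lam k • Lam k).IsSymm := by
      unfold Matrix.IsSymm
      rw [Matrix.transpose_smul, (hsym k)]
    have hpdk : (lam k • Lam k).PosDef := by
      constructor
      · have h1 := (hpd k).1
        unfold Matrix.IsHermitian at h1 ⊢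
        rw [Matrix.conjTranspose_smul, h1, star_trivial]
      · exact ((hpd k).smul hlk).2
    rw [gauss_KL hsymk hpdk]
    -- compute the mean difference
    have hdiff : w k - wt k = (1 / lam k) • ((r k n') • v) := by
      rw [hw k, hwt k, ← smul_sub]
      congr 1
      rw [add_sub_add_left_eq_sub, ← Finset.sum_sub_distrib]
      rw [Finset.sum_eq_single_of_mem n' (Finset.mem_univ n')
        (fun n _ hn => by rw [hsame n hn, sub_self])]
      rw [← smul_sub, hv]
    rw [hdiff]
    set a : ℝ := r k n' with ha
    set Q : ℝ := v ⬝ᵥ (Lam k).mulVec v with hQ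
    have hterm : (1/2 : ℝ) * (((1 / lam k) • (a • v)) ⬝ᵥ
        ((lam k • Lam k).mulVec ((1 / lam k) • (a • v)))) = a ^ 2 * Q / (2 * lam k) := by
      simp only [Matrix.smul_mulVec, Matrix.mulVec_smul, dotProduct_smul,
        smul_dotProduct, smul_eq_mul, ← hQ]
      field_simp
    rw [hterm]
    have ha0 : 0 ≤ a := hr0 k n'
    have ha1 : a ≤ 1 := hr1 k n'
    have hQ0 : 0 ≤ Q := by
      have := ((hpd k).posSemidef).dotProduct_mulVec_nonneg v
      simpa using this
    have hQB : Q ≤ B * R ^ 2 := by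
      refine le_trans (quad_bound (Lam k) v) ?_
      exact mul_le_mul (hB k) (pow_le_pow_left₀ (vecNorm_nonneg v) hR 2)
        (by positivity) hB0
    have ha2 : a ^ 2 ≤ 1 := by nlinarith
    have hnum : a ^ 2 * Q ≤ B * R ^ 2 := by
      calc a ^ 2 * Q ≤ 1 * Q := mul_le_mul_of_nonneg_right ha2 hQ0
        _ = Q := one_mul Q
        _ ≤ B * R ^ 2 := hQB
    refine div_le_div₀ (by positivity) hnum (by linarith) (by linarith)
  calc ∑ k, ∫ η : Fin Mdim → ℝ,
        gaussPdf (lam k • Lam k) (w k) η *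
          Real.log (gaussPdf (lam k • Lam k) (w k) η /
            gaussPdf (lam k • Lam k) (wt k) η)
      ≤ ∑ _k : Fin K, B * R ^ 2 / (2 * lam0) :=
        Finset.sum_le_sum (fun k _ => key k)
    _ = (K : ℝ) * B * R ^ 2 / (2 * lam0) := by
        rw [Finset.sum_const, Finset.card_univ, Fintype.card_fin, nsmul_eq_mul]
        ring
end
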